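/- arXiv:2408.14973 — 4 statements merged into one kernel-verified Lean document; each statement's English description precedes it below -/
import Mathlib

section
/- Let (x_n) be a statistically convergent sequence in an S-metric space (X,S), with statistical limit x. Then there exists a sequence (y_n) in X converging to x such that x_n = y_n for almost all n, i.e. δ({n : y_n ≠ x_n}) = 0. -/
open Filter

open scoped Classical in
/-- Natural density: `A ⊆ ℕ` has density `d` if `|{k ∈ A : k < n}|/n → d`. -/
def HasDensity (A : Set ℕ) (d : ℝ) : Prop :=
  Filter.Tendsto
    (fun n : ℕ => (((Finset.range n).filter (fun k => k ∈ A)).card : ℝ) / n)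
    Filter.atTop (nhds d)

/-- `S` is an S-metric on `X`. -/
structure IsSMetric {X : Type*} (S : X → X → X → ℝ) : Prop where
  nonneg : ∀ x y z, 0 ≤ S x y z
  eq_zero_iff : ∀ x y z, S x y z = 0 ↔ x = y ∧ y = z
  triangle : ∀ x y z a, S x y z ≤ S x x a + S y y a + S z z a

/-- Ordinary convergence of a sequence in an S-metric space. -/
def SConvergesTo {X : Type*} (S : X → X → X → ℝ) (x : ℕ → X) (l : X) : Prop :=
  ∀ ε : ℝ, 0 < ε → ∃ N : ℕ, ∀ n ≥ N, S (x n) (x n) l < ε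

/-- Statistical convergence of a sequence in an S-metric space. -/
def SStatConvergesTo {X : Type*} (S : X → X → X → ℝ) (x : ℕ → X) (l : X) : Prop :=
  ∀ ε : ℝ, 0 < ε → HasDensity {n : ℕ | ε ≤ S (x n) (x n) l} 0

/-- Cauchy sequence in an S-metric space. -/
def SCauchy {X : Type*} (S : X → X → X → ℝ) (x : ℕ → X) : Prop :=
  ∀ ε : ℝ, 0 < ε → ∃ k : ℕ, ∀ n ≥ k, ∀ m ≥ k, S (x n) (x n) (x m) < ε

/-- Statistically Cauchy sequence in an S-metric space. -/
def SStatCauchy {X : Type*} (S : X → X → X → ℝ) (x : ℕ → X) : Prop :=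
  ∀ ε : ℝ, 0 < ε → ∃ N : ℕ, HasDensity {n : ℕ | ε ≤ S (x n) (x n) (x N)} 0

/-- Statistically bounded sequence in an S-metric space. -/
def SStatBounded {X : Type*} (S : X → X → X → ℝ) (x : ℕ → X) : Prop :=
  ∀ u : X, ∃ B : ℝ, 0 < B ∧ HasDensity {n : ℕ | B ≤ S (x n) (x n) u} 0

/-- Rough convergence with roughness degree `r`. -/
def SRoughConvergesTo {X : Type*} (S : X → X → X → ℝ) (r : ℝ) (x : ℕ → X) (p : X) : Prop :=
  ∀ ε : ℝ, 0 < ε → ∃ k : ℕ, ∀ n ≥ k, S (x n) (x n) p < r + ε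

/-- Rough statistical convergence with roughness degree `r`. -/
def SRoughStatConvergesTo {X : Type*} (S : X → X → X → ℝ) (r : ℝ) (x : ℕ → X) (p : X) : Prop :=
  ∀ ε : ℝ, 0 < ε → HasDensity {n : ℕ | r + ε ≤ S (x n) (x n) p} 0

/-- The rough statistical limit set `st-LIM^r x_n`. -/
def stLIM {X : Type*} (S : X → X → X → ℝ) (r : ℝ) (x : ℕ → X) : Set X :=
  {p : X | SRoughStatConvergesTo S r x p}

/-- The topology on `X` generated by the open balls of the S-metric. -/
def sBallTopology {X : Type*} (S : X → X → X → ℝ) : TopologicalSpace X :=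
  TopologicalSpace.generateFrom
    {B : Set X | ∃ c : X, ∃ ε : ℝ, 0 < ε ∧ B = {y : X | S y y c < ε}}

/-!
The sets `A k = {n | 1/(k+1) ≤ S(xₙ, xₙ, l)}` increase with `k` and all have density zero. Density-zero
sets form a P-ideal: if `|A k ∩ [0, n)| ≤ n/(k+1)` for `n ≥ M k`, then the diagonal set
`B = {m | ∃ k, M k ≤ m ∧ m ∈ A k}` still has density zero, because below `n` it lies in `A j` for the
largest `j` with `M j ≤ n`. Replacing `xₙ` by `l` for `n ∈ B` gives a convergent sequence, since
every `A k` lies in `B` up to finitely many terms.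
-/

open scoped Classical

lemma HasDensity.mono_zero {A B : Set ℕ} (hAB : A ⊆ B) (hB : HasDensity B 0) :
    HasDensity A 0 := by
  refine squeeze_zero (fun n => by positivity) (fun n => ?_) hB
  gcongr

lemma exists_hasDensity_zero_eventually_superset {A : ℕ → Set ℕ} (hA : Monotone A)
    (hA0 : ∀ k, HasDensity (A k) 0) :
    ∃ B : Set ℕ, HasDensity B 0 ∧ ∀ k, ∀ᶠ m in atTop, m ∈ A k → m ∈ B := by
  have hN : ∀ k, ∃ N, ∀ n ≥ N,
      (((Finset.range n).filter (· ∈ A k)).card : ℝ) / n ≤ 1 / ((k : ℝ) + 1) := fun k =>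
    eventually_atTop.1 <| (hA0 k).eventually <| eventually_le_nhds (by positivity)
  choose N hN using hN
  set M : ℕ → ℕ := fun k => max k (N k)
  refine ⟨{m | ∃ k, M k ≤ m ∧ m ∈ A k}, ?_,
    fun k => eventually_atTop.2 ⟨M k, fun m hm hmA => ⟨k, hm, hmA⟩⟩⟩
  set K : ℕ → ℕ := fun n => Nat.findGreatest (fun j => M j ≤ n) n
  have le_K {j n : ℕ} (hj : M j ≤ n) : j ≤ K n :=
    Nat.le_findGreatest ((le_max_left _ _).trans hj) hj
  have hK : Tendsto K atTop atTop :=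
    tendsto_atTop_atTop.2 fun k => ⟨M k, fun n hn => le_K hn⟩
  refine squeeze_zero' (.of_forall fun n => by positivity) ?_
    (tendsto_one_div_add_atTop_nhds_zero_nat.comp hK)
  filter_upwards [eventually_ge_atTop (M 0)] with n hn
  have hMK : M (K n) ≤ n := Nat.findGreatest_spec (P := fun j => M j ≤ n) (Nat.zero_le n) hn
  refine le_trans ?_ (hN (K n) n ((le_max_right _ _).trans hMK))
  gcongr with m hmn
  rintro ⟨j, hjm, hjA⟩
  exact hA (le_K (hjm.trans (Finset.mem_range.1 hmn).le)) hjA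

theorem stmt_4_general {X : Type*} (S : X → X → X → ℝ) (hS : IsSMetric S)
    (x : ℕ → X) (l : X) (h : SStatConvergesTo S x l) :
    ∃ y : ℕ → X, SConvergesTo S y l ∧ HasDensity {n : ℕ | y n ≠ x n} 0 := by
  set A : ℕ → Set ℕ := fun k => {n | 1 / ((k : ℝ) + 1) ≤ S (x n) (x n) l}
  have hA : Monotone A := fun i j hij n hn =>
    show 1 / ((j : ℝ) + 1) ≤ _ from (Nat.one_div_le_one_div hij).trans hn
  obtain ⟨B, hB, hAB⟩ :=
    exists_hasDensity_zero_eventually_superset hA fun k => h _ (by positivity)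
  refine ⟨fun n => if n ∈ B then l else x n, fun ε hε => ?_,
    hB.mono_zero fun n hn => by_contra fun hnB => hn (if_neg hnB)⟩
  obtain ⟨k, hk⟩ := exists_nat_one_div_lt hε
  obtain ⟨N, hN⟩ := eventually_atTop.1 (hAB k)
  refine ⟨N, fun n hn => ?_⟩
  by_cases hnB : n ∈ B
  · simpa only [if_pos hnB, (hS.eq_zero_iff l l l).2 ⟨rfl, rfl⟩] using hε
  · simp only [if_neg hnB]
    exact (not_le.1 fun hle => hnB (hN n hn hle)).trans hk

theorem stmt_4 {X : Type*} [Nonempty X] (S : X → X → X → ℝ) (hS : IsSMetric S)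
    (x : ℕ → X) (l : X) (h : SStatConvergesTo S x l) :
    ∃ y : ℕ → X, SConvergesTo S y l ∧ HasDensity {n : ℕ | y n ≠ x n} 0 :=
  stmt_4_general S hS x l h
end

section
/- Every statistically convergent sequence in an S-metric space (X,S) has a convergent subsequence (converging to the statistical limit). -/
/-!
Along the set of indices where `S (x n) (x n) l < 1/(k+1)`, whose complement has density zero,
there are arbitrarily large indices for every `k`; picking one such index for each `k`, increasingly,
gives a subsequence converging to `l`.
-/

open Filter

open Topology

-- A set containing a whole tail `[M, ∞)` contains at least `n - M` of the first `n` numbers,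
-- so it has density `1`.
open scoped Classical in
theorem HasDensity.frequently_notMem {A : Set ℕ} {d : ℝ} (hA : HasDensity A d) (hd : d < 1) :
    ∃ᶠ n in atTop, n ∉ A := by
  by_contra! htail
  obtain ⟨M, hM⟩ := eventually_atTop.1 htail
  have hlower : ∀ᶠ n : ℕ in atTop,
      1 - (M : ℝ) / n ≤ (((Finset.range n).filter (fun k => k ∈ A)).card : ℝ) / n := by
    filter_upwards [eventually_gt_atTop M] with n hn
    have hcard : n - M ≤ ((Finset.range n).filter (fun k => k ∈ A)).card := by
      rw [← Nat.card_Ico]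
      refine Finset.card_le_card fun k hk => ?_
      rw [Finset.mem_Ico] at hk
      simpa [Finset.mem_filter, Finset.mem_range, hk.2] using hM k hk.1
    have hn0 : (0 : ℝ) < n := by exact_mod_cast (M.zero_le.trans_lt hn)
    rw [one_sub_div hn0.ne', div_le_div_iff_of_pos_right hn0]
    simpa [Nat.cast_sub hn.le] using (Nat.cast_le (α := ℝ)).2 hcard
  have hone : Tendsto (fun n : ℕ => 1 - (M : ℝ) / n) atTop (𝓝 1) := by
    simpa using tendsto_const_nhds.sub (tendsto_const_div_atTop_nhds_zero_nat (M : ℝ))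
  exact hd.not_ge (le_of_tendsto_of_tendsto hone hA hlower)

theorem SStatConvergesTo.frequently_lt {X : Type*} {S : X → X → X → ℝ} {x : ℕ → X} {l : X}
    (h : SStatConvergesTo S x l) {ε : ℝ} (hε : 0 < ε) :
    ∃ᶠ n in atTop, S (x n) (x n) l < ε := by
  simpa using (h ε hε).frequently_notMem zero_lt_one

theorem sConvergesTo_of_lt_one_div_succ {X : Type*} {S : X → X → X → ℝ} {y : ℕ → X} {l : X}
    (hy : ∀ k : ℕ, S (y k) (y k) l < 1 / (k + 1)) : SConvergesTo S y l := by
  intro ε hε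
  obtain ⟨N, hN⟩ := exists_nat_one_div_lt hε
  refine ⟨N, fun k hk => ?_⟩
  calc S (y k) (y k) l < 1 / (k + 1) := hy k
    _ ≤ 1 / (N + 1) := by gcongr
    _ < ε := hN

theorem stmt_5_general {X : Type*} (S : X → X → X → ℝ)
    (x : ℕ → X) (l : X) (h : SStatConvergesTo S x l) :
    ∃ n : ℕ → ℕ, StrictMono n ∧ SConvergesTo S (fun k => x (n k)) l := by
  obtain ⟨n, hmono, hsmall⟩ := extraction_forall_of_frequently fun k : ℕ =>
    h.frequently_lt (ε := 1 / (k + 1)) Nat.one_div_pos_of_nat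
  exact ⟨n, hmono, sConvergesTo_of_lt_one_div_succ hsmall⟩

theorem stmt_5 {X : Type*} [Nonempty X] (S : X → X → X → ℝ) (hS : IsSMetric S)
    (x : ℕ → X) (l : X) (h : SStatConvergesTo S x l) :
    ∃ n : ℕ → ℕ, StrictMono n ∧ SConvergesTo S (fun k => x (n k)) l :=
  stmt_5_general S x l h
end

section
/- Every statistically complete S-metric space is complete; that is, if every statistically Cauchy sequence in (X,S) is statistically convergent, then every Cauchy sequence in (X,S) is convergent. -/
open Filter

/-!
A Cauchy sequence is statistically Cauchy: only finitely many terms are `ε`-far from a late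
enough term, and finite sets have density zero. Its statistical limit `l` is then a limit: the
indices `m` with `x m` `ε`-close to `l` have density one, so they are unbounded, and
`S(xₙ, xₙ, l) ≤ 2 S(xₙ, xₙ, xₘ) + S(xₘ, xₘ, l)` for such a late `m`.
-/

theorem Set.Finite.hasDensity_zero {A : Set ℕ} (hA : A.Finite) : HasDensity A 0 := by
  classical
  refine squeeze_zero (fun n => by positivity) (fun n => ?_)
    (tendsto_const_div_atTop_nhds_zero_nat (hA.toFinset.card : ℝ))
  refine div_le_div_of_nonneg_right ?_ n.cast_nonneg
  exact_mod_cast Finset.card_le_card fun k hk => hA.mem_toFinset.2 (Finset.mem_filter.1 hk).2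

theorem HasDensity.compl {A : Set ℕ} {d : ℝ} (h : HasDensity A d) : HasDensity Aᶜ (1 - d) := by
  classical
  refine (tendsto_const_nhds.sub h).congr' (eventually_atTop.2 ⟨1, fun n hn₁ => ?_⟩)
  have hcard := Finset.card_filter_add_card_filter_not (s := Finset.range n) (· ∈ A)
  have hn : (n : ℝ) ≠ 0 := Nat.cast_ne_zero.2 (Nat.one_le_iff_ne_zero.1 hn₁)
  rw [eq_div_iff hn, sub_mul, div_mul_cancel₀ _ hn, one_mul, sub_eq_iff_eq_add']
  norm_cast
  convert (Finset.card_range n ▸ hcard).symm using 4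
  exact Iff.rfl

theorem HasDensity.infinite_of_pos {A : Set ℕ} {d : ℝ} (h : HasDensity A d) (hd : 0 < d) :
    A.Infinite :=
  fun hA => hd.ne' (tendsto_nhds_unique h hA.hasDensity_zero)

theorem HasDensity.infinite_compl_of_lt_one {A : Set ℕ} {d : ℝ} (h : HasDensity A d)
    (hd : d < 1) : Aᶜ.Infinite :=
  h.compl.infinite_of_pos (sub_pos.2 hd)

namespace IsSMetric

variable {X : Type*} {S : X → X → X → ℝ}

theorem self_eq_zero (hS : IsSMetric S) (x : X) : S x x x = 0 :=
  (hS.eq_zero_iff x x x).2 ⟨rfl, rfl⟩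

theorem symm (hS : IsSMetric S) (x y : X) : S x x y = S y y x := by
  have hxy := hS.triangle x x y x
  have hyx := hS.triangle y y x y
  rw [hS.self_eq_zero] at hxy hyx
  linarith

theorem le_two_mul_add (hS : IsSMetric S) (x y z : X) : S x x z ≤ 2 * S x x y + S y y z := by
  linarith [hS.triangle x x z y, hS.symm z y]

end IsSMetric

namespace SCauchy

variable {X : Type*} {S : X → X → X → ℝ} {x : ℕ → X}

theorem sStatCauchy (hx : SCauchy S x) : SStatCauchy S x := by
  intro ε hε
  obtain ⟨k, hk⟩ := hx ε hε
  refine ⟨k, ((Set.finite_lt_nat k).subset fun n hn => ?_).hasDensity_zero⟩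
  by_contra! hkn
  exact (hk n (not_lt.1 hkn) k le_rfl).not_ge hn

theorem sConvergesTo_of_sStatConvergesTo (hS : IsSMetric S) (hx : SCauchy S x) {l : X}
    (hl : SStatConvergesTo S x l) : SConvergesTo S x l := by
  intro ε hε
  obtain ⟨k, hk⟩ := hx (ε / 3) (by positivity)
  obtain ⟨m, hm, hkm⟩ :=
    ((hl (ε / 3) (by positivity)).infinite_compl_of_lt_one one_pos).exists_gt k
  simp only [Set.mem_compl_iff, Set.mem_ofPred_eq, not_le] at hm
  refine ⟨k, fun n hn => ?_⟩
  calc S (x n) (x n) l ≤ 2 * S (x n) (x n) (x m) + S (x m) (x m) l := hS.le_two_mul_add _ _ _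
    _ < ε := by linarith [hk n hn m hkm.le]

end SCauchy

theorem stmt_7_general {X : Type*} (S : X → X → X → ℝ) (hS : IsSMetric S)
    (hcomp : ∀ x : ℕ → X, SStatCauchy S x → ∃ l : X, SStatConvergesTo S x l) :
    ∀ x : ℕ → X, SCauchy S x → ∃ l : X, SConvergesTo S x l := by
  intro x hx
  obtain ⟨l, hl⟩ := hcomp x hx.sStatCauchy
  exact ⟨l, hx.sConvergesTo_of_sStatConvergesTo hS hl⟩

theorem stmt_7 {X : Type*} [Nonempty X] (S : X → X → X → ℝ) (hS : IsSMetric S)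
    (hcomp : ∀ x : ℕ → X, SStatCauchy S x → ∃ l : X, SStatConvergesTo S x l) :
    ∀ x : ℕ → X, SCauchy S x → ∃ l : X, SConvergesTo S x l :=
  stmt_7_general S hS hcomp
end

section
/- Let r ≥ 0, let (x_n) be a sequence in an S-metric space (X,S), and let (x_{n_p}) be a subsequence of (x_n), given by a strictly increasing sequence (n_p) of indices, such that the set {n_1, n_2, ...} has natural density 1. Then st-LIM^r x_n ⊆ st-LIM^r x_{n_p}. -/
open Filter

open Topology

/-
If `(n_p)` enumerates a set of positive density `d`, then `p / n_p → d`, so `n_p / p` stays bounded.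
Counting the indices `q < p` with `n_q ∈ A` gives at most `|A ∩ [0, n_p)|`, hence that proportion is
at most `(|A ∩ [0, n_p)| / n_p) · (n_p / p) → 0 · d⁻¹` whenever `A` has density zero. Applied to
`A = {k | r + ε ≤ S(x_k, x_k, x)}`, this is the statement.
-/

namespace StrictMono

variable {n : ℕ → ℕ}

theorem card_filter_range_mem_range (hn : StrictMono n) [DecidablePred (· ∈ Set.range n)]
    (m : ℕ) : ((Finset.range (n m)).filter (· ∈ Set.range n)).card = m := by
  have himage : (Finset.range (n m)).filter (· ∈ Set.range n) = (Finset.range m).image n := by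
    ext k
    simp only [Finset.mem_filter, Finset.mem_range, Finset.mem_image, Set.mem_range]
    constructor
    · rintro ⟨hk, q, rfl⟩
      exact ⟨q, hn.lt_iff_lt.mp hk, rfl⟩
    · rintro ⟨q, hq, rfl⟩
      exact ⟨hn hq, q, rfl⟩
  rw [himage, Finset.card_image_of_injective _ hn.injective, Finset.card_range]

theorem card_filter_range_preimage_le (hn : StrictMono n) (A : Set ℕ)
    [DecidablePred (· ∈ A)] [DecidablePred (· ∈ n ⁻¹' A)] (m : ℕ) :
    ((Finset.range m).filter (· ∈ n ⁻¹' A)).card ≤ ((Finset.range (n m)).filter (· ∈ A)).card :=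
  Finset.card_le_card_of_injOn n
    (fun q hq => by
      simp only [Finset.coe_filter, Finset.mem_range, Set.mem_preimage, Set.mem_ofPred_eq] at hq ⊢
      exact ⟨hn hq.1, hq.2⟩)
    hn.injective.injOn

theorem tendsto_div_of_hasDensity_range (hn : StrictMono n) {d : ℝ}
    (hd : HasDensity (Set.range n) d) :
    Tendsto (fun m : ℕ => (m : ℝ) / n m) atTop (𝓝 d) := by
  classical
  simpa only [Function.comp_def, hn.card_filter_range_mem_range] using
    hd.comp hn.tendsto_atTop

end StrictMono

theorem HasDensity.preimage_strictMono {A : Set ℕ} (hA : HasDensity A 0) {n : ℕ → ℕ}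
    (hn : StrictMono n) {d : ℝ} (hd : HasDensity (Set.range n) d) (hd₀ : d ≠ 0) :
    HasDensity (n ⁻¹' A) 0 := by
  classical
  have hratio : Tendsto (fun m : ℕ => (n m : ℝ) / m) atTop (𝓝 d⁻¹) := by
    simpa only [inv_div] using (hn.tendsto_div_of_hasDensity_range hd).inv₀ hd₀
  have hbound : Tendsto (fun m : ℕ =>
      (((Finset.range (n m)).filter (· ∈ A)).card : ℝ) / n m * ((n m : ℝ) / m))
      atTop (𝓝 0) := by
    simpa only [zero_mul, Function.comp_def] using (hA.comp hn.tendsto_atTop).mul hratio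
  refine tendsto_of_tendsto_of_tendsto_of_le_of_le' tendsto_const_nhds hbound
    (Eventually.of_forall fun m => by positivity) ?_
  filter_upwards [eventually_ge_atTop 1] with m hm
  have hnm : (n m : ℝ) ≠ 0 := by
    have : 0 < n m := hm.trans hn.le_apply
    positivity
  rw [div_mul_div_cancel₀ hnm]
  exact div_le_div_of_nonneg_right (mod_cast hn.card_filter_range_preimage_le A m) m.cast_nonneg

theorem stmt_17_general {X : Type*} (S : X → X → X → ℝ)
    (r : ℝ) (x : ℕ → X) (n : ℕ → ℕ) (hn : StrictMono n)
    (hdens : HasDensity (Set.range n) 1) :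
    stLIM S r x ⊆ stLIM S r (fun p => x (n p)) :=
  fun _ hp ε hε => (hp ε hε).preimage_strictMono hn hdens one_ne_zero

theorem stmt_17 {X : Type*} [Nonempty X] (S : X → X → X → ℝ) (hS : IsSMetric S)
    (r : ℝ) (hr : 0 ≤ r) (x : ℕ → X) (n : ℕ → ℕ) (hn : StrictMono n)
    (hdens : HasDensity (Set.range n) 1) :
    stLIM S r x ⊆ stLIM S r (fun p => x (n p)) :=
  stmt_17_general S r x n hn hdens
end
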